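/- Let n be a positive integer, μ ∈ ℂ^n a generic vector, and Δ a local derivation on the Witt algebra W_n = Der(ℂ[t_1^{±1},…,t_n^{±1}]) such that Δ(d_μ) = 0. Then Δ vanishes on the Cartan subalgebra 𝔥 = span_ℂ{d_1,…,d_n}; in particular Δ(d_i) = 0 for every 1 ≤ i ≤ n. -/

import Mathlib

open scoped BigOperators

noncomputable section

/-- The Laurent polynomial algebra `ℂ[t₁^{±1},…,tₙ^{±1}]`, realized as the group
algebra of `ℤⁿ` over `ℂ`. -/
abbrev LaurentAlg (n : ℕ) : Type := AddMonoidAlgebra ℂ (Fin n → ℤ)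

/-- The Witt algebra `Wₙ = Der(ℂ[t₁^{±1},…,tₙ^{±1}])`. -/
abbrev WittAlg (n : ℕ) : Type := Derivation ℂ (LaurentAlg n) (LaurentAlg n)

/-- Pairing `(μ, β) ↦ ∑ μᵢ βᵢ`. -/
def dotp {n : ℕ} (μ : Fin n → ℂ) (β : Fin n → ℤ) : ℂ := ∑ i, μ i * (β i : ℂ)

lemma dotp_add {n : ℕ} (μ : Fin n → ℂ) (β γ : Fin n → ℤ) :
    dotp μ (β + γ) = dotp μ β + dotp μ γ := by
  simp [dotp, mul_add, Finset.sum_add_distrib]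

lemma dotp_zero {n : ℕ} (μ : Fin n → ℂ) : dotp μ 0 = 0 := by simp [dotp]

/-- A vector `μ ∈ ℂⁿ` is generic if `μ·α ≠ 0` for all nonzero `α ∈ ℤⁿ`. -/
def IsGeneric {n : ℕ} (μ : Fin n → ℂ) : Prop :=
  ∀ α : Fin n → ℤ, α ≠ 0 → dotp μ α ≠ 0

/-- Underlying linear map of `t^α d_μ`. -/
def wdAux {n : ℕ} (μ : Fin n → ℂ) (α : Fin n → ℤ) : LaurentAlg n →ₗ[ℂ] LaurentAlg n :=
  (AddMonoidAlgebra.coeffLinearEquiv ℂ).symm.toLinearMap ∘ₗ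
    (Finsupp.lsum ℂ fun β => dotp μ β • Finsupp.lsingle (α + β)) ∘ₗ
    (AddMonoidAlgebra.coeffLinearEquiv ℂ).toLinearMap

lemma wdAux_single {n : ℕ} (μ : Fin n → ℂ) (α β : Fin n → ℤ) (c : ℂ) :
    wdAux μ α (AddMonoidAlgebra.single β c) = dotp μ β • AddMonoidAlgebra.single (α + β) c := by
  classical
  rw [wdAux, AddMonoidAlgebra.single]
  show AddMonoidAlgebra.ofCoeff (Finsupp.lsum ℂ (fun β => dotp μ β • Finsupp.lsingle (α + β))
    (Finsupp.single β c)) = _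
  rw [Finsupp.lsum_single]
  rfl

/-- The derivation `t^α d_μ` of the Laurent polynomial algebra, sending
`t^β ↦ (μ·β) t^{α+β}`.  In particular `wd μ 0 = d_μ` and
`wd (Pi.single i 1) α = t^α dᵢ`. -/
def wd {n : ℕ} (μ : Fin n → ℂ) (α : Fin n → ℤ) : WittAlg n where
  toLinearMap := wdAux μ α
  map_one_eq_zero' := by
    rw [show (1 : LaurentAlg n) = AddMonoidAlgebra.single 0 1 from rfl, wdAux_single, dotp_zero,
      zero_smul]
  leibniz' := by
    intro a b
    show wdAux μ α (a * b) = a • wdAux μ α b + b • wdAux μ α a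
    induction a using AddMonoidAlgebra.induction_linear with
    | zero => simp
    | add f g hf hg =>
        rw [add_mul, map_add, hf, hg, map_add]
        simp only [smul_eq_mul, add_mul, mul_add]
        ring
    | single β c =>
      induction b using AddMonoidAlgebra.induction_linear with
      | zero => simp
      | add f g hf hg =>
          rw [mul_add, map_add, hf, hg, map_add]
          simp only [smul_eq_mul, add_mul, mul_add]
          ring
      | single γ d =>
          show wdAux μ α (AddMonoidAlgebra.single β c * AddMonoidAlgebra.single γ d) =
            AddMonoidAlgebra.single β c • wdAux μ α (AddMonoidAlgebra.single γ d)
            + AddMonoidAlgebra.single γ d • wdAux μ α (AddMonoidAlgebra.single β c)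
          rw [AddMonoidAlgebra.single_mul_single, wdAux_single, wdAux_single, wdAux_single,
            smul_eq_mul, smul_eq_mul, mul_smul_comm, mul_smul_comm,
            AddMonoidAlgebra.single_mul_single, AddMonoidAlgebra.single_mul_single,
            dotp_add, add_smul]
          rw [show β + (α + γ) = α + (β + γ) by abel, show γ + (α + β) = α + (β + γ) by abel,
            mul_comm d c, add_comm]

/-- A linear map `Δ` on a Lie algebra `L` is a local derivation if for each `x`
there is a Lie algebra derivation `Dₓ` with `Δ x = Dₓ x`. -/
def IsLocalDerivation {L : Type*} [LieRing L] [LieAlgebra ℂ L] (Δ : L →ₗ[ℂ] L) : Prop :=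
  ∀ x : L, ∃ D : LieDerivation ℂ L L, Δ x = D x

end

/-! For a derivation `D` of `Wₙ` and `λ·α = 0`, applying `D` to
`⁅d_λ, t^β d_ν⁆ = (λ·β) t^β d_ν` and reading off the coefficient of `t^{α+β+γ}` at `t^γ` shows
that `g δ := [t^{α+δ}] D(d_λ)(t^δ)` satisfies `(ν·γ) g(β+γ) = (ν·(α+γ)) g(γ)` for all `ν, β, γ`;
together with `g 0 = 0` this forces `g = 0`. For arbitrary `α`, genericity of `μ` gives `c` with
`(λ - cμ)·α = 0`, and `Δ(d_λ) = Δ(d_{λ-cμ}) = D(d_{λ-cμ})` for some derivation `D`, so every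
coefficient of `Δ(d_λ)` vanishes. -/

section

open AddMonoidAlgebra

variable {n : ℕ}

lemma dotp_sub_smul (l m : Fin n → ℂ) (c : ℂ) (γ : Fin n → ℤ) :
    dotp (l - c • m) γ = dotp l γ - c * dotp m γ := by
  simp [dotp, sub_mul, Finset.sum_sub_distrib, Finset.mul_sum, mul_assoc]

lemma dotp_single_one (i : Fin n) (γ : Fin n → ℤ) : dotp (Pi.single i 1) γ = γ i := by
  simp [dotp, Pi.single_apply, ite_mul]

lemma exists_dotp_ne_zero {α : Fin n → ℤ} (hα : α ≠ 0) : ∃ ν : Fin n → ℂ, dotp ν α ≠ 0 := by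
  obtain ⟨i, hi⟩ := Function.ne_iff.mp hα
  exact ⟨Pi.single i 1, by rw [dotp_single_one]; exact_mod_cast hi⟩

lemma IsGeneric.exists_dotp_sub_smul_eq_zero {μ : Fin n → ℂ} (hμ : IsGeneric μ)
    (l : Fin n → ℂ) (α : Fin n → ℤ) : ∃ c : ℂ, dotp (l - c • μ) α = 0 := by
  by_cases hα : α = 0
  · exact ⟨0, by rw [hα, dotp_zero]⟩
  · exact ⟨dotp l α / dotp μ α, by rw [dotp_sub_smul, div_mul_cancel₀ _ (hμ α hα), sub_self]⟩

lemma wd_apply_single (ν : Fin n → ℂ) (b γ : Fin n → ℤ) (c : ℂ) :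
    wd ν b (single γ c) = dotp ν γ • single (b + γ) c :=
  wdAux_single ν b γ c

lemma coeff_wd_apply (ν : Fin n → ℂ) (b : Fin n → ℤ) (x : LaurentAlg n) (ε : Fin n → ℤ) :
    (wd ν b x).coeff ε = dotp ν (ε - b) * x.coeff (ε - b) := by
  induction x using AddMonoidAlgebra.induction_linear with
  | zero => simp
  | add f g hf hg => simp only [map_add, coeff_add, Finsupp.add_apply, hf, hg, mul_add]
  | single γ c =>
    rw [wd_apply_single]
    by_cases hγ : γ = ε - b
    · simp [hγ, coeff_single]
    · have hbγ : b + γ ≠ ε := fun h => hγ (by rw [← h, add_sub_cancel_left])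
      simp [coeff_single, hbγ, Ne.symm hγ]

theorem WittAlg.ext_single {X Y : WittAlg n} (h : ∀ β, X (single β 1) = Y (single β 1)) :
    X = Y := by
  refine Derivation.ext fun a => ?_
  induction a using AddMonoidAlgebra.induction_linear with
  | zero => simp
  | add f g hf hg => rw [map_add, map_add, hf, hg]
  | single β c =>
    rw [← mul_one c, ← smul_eq_mul, ← smul_single, X.map_smul, Y.map_smul, h]

lemma wd_eq_wd_sub_smul_add_smul (l m : Fin n → ℂ) (c : ℂ) (b : Fin n → ℤ) :
    wd l b = wd (l - c • m) b + c • wd m b := by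
  refine WittAlg.ext_single fun β => ?_
  rw [Derivation.add_apply, Derivation.smul_apply, wd_apply_single, wd_apply_single,
    wd_apply_single, dotp_sub_smul, smul_smul, sub_smul, sub_add_cancel]

lemma lie_wd_zero_wd (l ν : Fin n → ℂ) (b : Fin n → ℤ) :
    ⁅wd l 0, wd ν b⁆ = dotp l b • wd ν b := by
  refine WittAlg.ext_single fun β => ?_
  simp only [Derivation.commutator_apply, wd_apply_single, Derivation.map_smul,
    Derivation.smul_apply, zero_add, dotp_add, smul_smul, ← sub_smul]
  ring_nf

/-- The coefficient of `t^{α+δ}` in `X(t^δ)`: for `X = ∑_α t^α d_{ν_α}` it is `ν_α·δ`. -/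
noncomputable def weightCoeff (X : WittAlg n) (α δ : Fin n → ℤ) : ℂ :=
  (X (single δ 1)).coeff (α + δ)

lemma weightCoeff_smul (c : ℂ) (X : WittAlg n) (α δ : Fin n → ℤ) :
    weightCoeff (c • X) α δ = c * weightCoeff X α δ := rfl

lemma weightCoeff_add (X Y : WittAlg n) (α δ : Fin n → ℤ) :
    weightCoeff (X + Y) α δ = weightCoeff X α δ + weightCoeff Y α δ := rfl

lemma weightCoeff_zero_right (X : WittAlg n) (α : Fin n → ℤ) : weightCoeff X α 0 = 0 := by
  simp [weightCoeff, ← one_def]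

theorem WittAlg.eq_zero_of_weightCoeff {X : WittAlg n} (h : ∀ α δ, weightCoeff X α δ = 0) :
    X = 0 := by
  refine WittAlg.ext_single fun β => coeff_injective (Finsupp.ext fun ε => ?_)
  simpa [weightCoeff] using h (ε - β) β

lemma weightCoeff_lie_wd (X : WittAlg n) (ν : Fin n → ℂ) (α β γ : Fin n → ℤ) :
    weightCoeff ⁅X, wd ν β⁆ (α + β) γ =
      dotp ν γ * weightCoeff X α (β + γ) - dotp ν (α + γ) * weightCoeff X α γ := by
  simp only [weightCoeff, Derivation.commutator_apply, coeff_sub, Finsupp.sub_apply,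
    coeff_wd_apply, wd_apply_single, X.map_smul, coeff_smul_apply, smul_eq_mul]
  rw [show α + β + γ - β = α + γ by abel, show α + β + γ = α + (β + γ) by abel]

lemma weightCoeff_wd_zero_lie (l : Fin n → ℂ) (X : WittAlg n) (α γ : Fin n → ℤ) :
    weightCoeff ⁅wd l 0, X⁆ α γ = dotp l α * weightCoeff X α γ := by
  simp only [weightCoeff, Derivation.commutator_apply, coeff_sub, Finsupp.sub_apply,
    coeff_wd_apply, wd_apply_single, X.map_smul, coeff_smul_apply, smul_eq_mul, sub_zero,
    zero_add, dotp_add]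
  ring

lemma LieDerivation.weightCoeff_relation (D : LieDerivation ℂ (WittAlg n) (WittAlg n))
    {l : Fin n → ℂ} {α : Fin n → ℤ} (hl : dotp l α = 0) (ν : Fin n → ℂ) (β γ : Fin n → ℤ) :
    dotp ν γ * weightCoeff (D (wd l 0)) α (β + γ) =
      dotp ν (α + γ) * weightCoeff (D (wd l 0)) α γ := by
  have hD := congrArg (weightCoeff · (α + β) γ) (D.apply_lie_eq_add (wd l 0) (wd ν β))
  simp only [lie_wd_zero_wd, map_smul, weightCoeff_smul, weightCoeff_add, weightCoeff_lie_wd,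
    weightCoeff_wd_zero_lie, dotp_add, hl, zero_add] at hD
  rw [dotp_add]
  linear_combination -hD

lemma eq_zero_of_dotp_mul_eq {g : (Fin n → ℤ) → ℂ} {α : Fin n → ℤ} (h0 : g 0 = 0)
    (h : ∀ ν β γ, dotp ν γ * g (β + γ) = dotp ν (α + γ) * g γ) (δ : Fin n → ℤ) : g δ = 0 := by
  have hg : ∀ ν γ, dotp ν (α + γ) ≠ 0 → g γ = 0 := fun ν γ hν => by
    have := h ν (-γ) γ
    rwa [neg_add_cancel, h0, mul_zero, zero_eq_mul, or_iff_right hν] at this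
  by_cases hαδ : α + δ = 0
  · by_cases hα : α = 0
    · rw [hα, zero_add] at hαδ
      rwa [hαδ]
    -- `δ = -α ≠ 0`: go through `γ = α`, where `g α = 0` because `ν·(2α) ≠ 0`.
    obtain ⟨ν, hν⟩ := exists_dotp_ne_zero hα
    have hαα : dotp ν (α + α) ≠ 0 := by
      rw [dotp_add, ← two_mul]; exact mul_ne_zero two_ne_zero hν
    have := h ν (δ - α) α
    rwa [sub_add_cancel, hg ν α hαα, mul_zero, mul_eq_zero, or_iff_right hν] at this
  · obtain ⟨ν, hν⟩ := exists_dotp_ne_zero hαδ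
    exact hg ν δ hν

lemma LieDerivation.weightCoeff_apply_wd_zero (D : LieDerivation ℂ (WittAlg n) (WittAlg n))
    {l : Fin n → ℂ} {α : Fin n → ℤ} (hl : dotp l α = 0) (δ : Fin n → ℤ) :
    weightCoeff (D (wd l 0)) α δ = 0 :=
  eq_zero_of_dotp_mul_eq (weightCoeff_zero_right _ α) (D.weightCoeff_relation hl) δ

lemma IsLocalDerivation.apply_wd_zero {μ : Fin n → ℂ} (hμ : IsGeneric μ)
    {Δ : WittAlg n →ₗ[ℂ] WittAlg n} (hΔ : IsLocalDerivation Δ) (h0 : Δ (wd μ 0) = 0)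
    (l : Fin n → ℂ) : Δ (wd l 0) = 0 := by
  refine WittAlg.eq_zero_of_weightCoeff fun α δ => ?_
  obtain ⟨c, hc⟩ := hμ.exists_dotp_sub_smul_eq_zero l α
  obtain ⟨D, hD⟩ := hΔ (wd (l - c • μ) 0)
  rw [wd_eq_wd_sub_smul_add_smul l μ c, map_add, map_smul, h0, smul_zero, add_zero, hD]
  exact D.weightCoeff_apply_wd_zero hc δ

end

theorem local_derivation_vanishes_on_Cartan_general (n : ℕ)
    (μ : Fin n → ℂ) (hμ : IsGeneric μ)
    (Δ : WittAlg n →ₗ[ℂ] WittAlg n) (hΔ : IsLocalDerivation Δ)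
    (h0 : Δ (wd μ 0) = 0) :
    (∀ x ∈ Submodule.span ℂ (Set.range fun i : Fin n => wd (Pi.single i 1) 0), Δ x = 0)
      ∧ ∀ i : Fin n, Δ (wd (Pi.single i 1) 0) = 0 := by
  have hΔ0 : ∀ l, Δ (wd l 0) = 0 := hΔ.apply_wd_zero hμ h0
  have hspan :
      Submodule.span ℂ (Set.range fun i : Fin n => wd (Pi.single i 1) 0) ≤ LinearMap.ker Δ :=
    Submodule.span_le.mpr (Set.range_subset_iff.mpr fun i => hΔ0 _)
  exact ⟨fun x hx => hspan hx, fun i => hΔ0 _⟩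

/-- If `Δ` is a local derivation on `Wₙ` with `Δ(d_μ) = 0` (`μ` generic),
then `Δ` vanishes on the Cartan subalgebra `𝔥 = span{d₁,…,dₙ}`; in particular
`Δ(dᵢ) = 0` for all `i`. -/
theorem local_derivation_vanishes_on_Cartan (n : ℕ) (hn : 0 < n)
    (μ : Fin n → ℂ) (hμ : IsGeneric μ)
    (Δ : WittAlg n →ₗ[ℂ] WittAlg n) (hΔ : IsLocalDerivation Δ)
    (h0 : Δ (wd μ 0) = 0) :
    (∀ x ∈ Submodule.span ℂ (Set.range fun i : Fin n => wd (Pi.single i 1) 0), Δ x = 0)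
      ∧ ∀ i : Fin n, Δ (wd (Pi.single i 1) 0) = 0 :=
  local_derivation_vanishes_on_Cartan_general n μ hμ Δ hΔ h0
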